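/- arXiv:1702.06533 — 4 statements merged into one kernel-verified Lean document; each statement's English description precedes it below -/
import Mathlib

section
/- Let Σxx ∈ ℝ^{dx×dx} and Σyy ∈ ℝ^{dy×dy} be symmetric positive definite, let Σxy ∈ ℝ^{dx×dy}, and set T = Σxx^{-1/2} Σxy Σyy^{-1/2} with ρ1 = ‖T‖. Let a1 ∈ ℝ^{dx} and b1 ∈ ℝ^{dy} be unit vectors forming a top singular pair of T, i.e. T b1 = ρ1 a1 and Tᵀ a1 = ρ1 b1, and set u* = Σxx^{-1/2} a1, v* = Σyy^{-1/2} b1. Let η ∈ (0,1) and let u ∈ ℝ^{dx}, v ∈ ℝ^{dy} be nonzero. If (1/2)·( uᵀΣxx u* / ‖Σxx^{1/2} u‖ + vᵀΣyy v* / ‖Σyy^{1/2} v‖ ) ≥ 1 − η/8, then uᵀ Σxy v / ( √(uᵀΣxx u) · √(vᵀΣyy v) ) ≥ ρ1 · (1 − η). -/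
open Matrix Finset

/-- Euclidean norm of a vector in `ℝ^n`. -/
noncomputable def vnorm {n : Type*} [Fintype n] (x : n → ℝ) : ℝ := Real.sqrt (x ⬝ᵥ x)

/-- Spectral (operator) norm of a real matrix: the supremum of `‖A x‖` over unit vectors `x`. -/
noncomputable def specNorm {m n : Type*} [Fintype m] [Fintype n] (A : Matrix m n ℝ) : ℝ :=
  sSup {c : ℝ | ∃ x : n → ℝ, vnorm x = 1 ∧ c = vnorm (A.mulVec x)}

open scoped ComplexOrder in
/-- The positive semidefinite square root of a positive semidefinite matrix
(the definition `Matrix.PosSemidef.sqrt` of the older Mathlib, since removed). -/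
noncomputable def Matrix.PosSemidef.sqrt {n : Type*} [Fintype n] [DecidableEq n] {𝕜 : Type*}
    [RCLike 𝕜] {A : Matrix n n 𝕜} (hA : A.PosSemidef) : Matrix n n 𝕜 :=
  hA.1.eigenvectorUnitary.1 * diagonal ((↑) ∘ (√·) ∘ hA.1.eigenvalues) *
  (star hA.1.eigenvectorUnitary : Matrix n n 𝕜)

/-!
Whitening with `P = Σxx^{1/2}`, `Q = Σyy^{1/2}` turns the correlation of `(u, v)` into `⟪x, T y⟫`
and its alignment into `(⟪x, a₁⟫ + ⟪y, b₁⟫) / 2`, where `x = Pu/‖Pu‖` and `y = Qv/‖Qv‖` are unit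
vectors. Writing `x = a₁ + d`, `y = b₁ + e`, the singular-pair equations give
`⟪x, T y⟫ = ρ₁ (1 - ‖d‖²/2 - ‖e‖²/2) + ⟪d, T e⟫`, and `|⟪d, T e⟫| ≤ ρ₁ ‖d‖ ‖e‖` because
`ρ₁ = ‖T‖`. Hence `⟪x, T y⟫ ≥ ρ₁ (1 - ‖d‖² - ‖e‖²) = ρ₁ (2 (⟪x, a₁⟫ + ⟪y, b₁⟫) - 3)`, which is at
least `ρ₁ (1 - η/2)` once the alignment is at least `1 - η/8`.
-/

section vnorm

variable {n : Type*} [Fintype n]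

lemma vnorm_eq_norm_toLp (x : n → ℝ) : vnorm x = ‖WithLp.toLp 2 x‖ := by
  rw [vnorm, norm_eq_sqrt_real_inner, EuclideanSpace.inner_toLp_toLp, star_trivial,
    dotProduct_comm]

lemma dotProduct_eq_inner_toLp (x y : n → ℝ) :
    x ⬝ᵥ y = inner ℝ (WithLp.toLp 2 x) (WithLp.toLp 2 y) := by
  rw [EuclideanSpace.inner_toLp_toLp, star_trivial, dotProduct_comm]

lemma sq_vnorm (x : n → ℝ) : vnorm x ^ 2 = x ⬝ᵥ x := by
  rw [vnorm_eq_norm_toLp, dotProduct_eq_inner_toLp, real_inner_self_eq_norm_sq]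

lemma vnorm_smul (c : ℝ) (x : n → ℝ) : vnorm (c • x) = |c| * vnorm x := by
  rw [vnorm_eq_norm_toLp, vnorm_eq_norm_toLp, WithLp.toLp_smul, norm_smul, Real.norm_eq_abs]

lemma vnorm_pos {x : n → ℝ} (hx : x ≠ 0) : 0 < vnorm x := by
  rw [vnorm_eq_norm_toLp, norm_pos_iff]
  exact fun h => hx (congrArg WithLp.ofLp h)

lemma vnorm_inv_smul_self {x : n → ℝ} (hx : x ≠ 0) : vnorm ((vnorm x)⁻¹ • x) = 1 := by
  rw [vnorm_smul, abs_inv, abs_of_pos (vnorm_pos hx), inv_mul_cancel₀ (vnorm_pos hx).ne']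

lemma abs_dotProduct_le_vnorm_mul_vnorm (x y : n → ℝ) : |x ⬝ᵥ y| ≤ vnorm x * vnorm y := by
  rw [dotProduct_eq_inner_toLp, vnorm_eq_norm_toLp, vnorm_eq_norm_toLp]
  exact abs_real_inner_le_norm _ _

lemma vnorm_sub_sq (x y : n → ℝ) :
    vnorm (x - y) ^ 2 = vnorm x ^ 2 - 2 * (x ⬝ᵥ y) + vnorm y ^ 2 := by
  rw [vnorm_eq_norm_toLp, vnorm_eq_norm_toLp, vnorm_eq_norm_toLp, dotProduct_eq_inner_toLp,
    WithLp.toLp_sub, norm_sub_sq_real]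

end vnorm

lemma specNorm_nonneg {m n : Type*} [Fintype m] [Fintype n] (A : Matrix m n ℝ) :
    0 ≤ specNorm A :=
  Real.sSup_nonneg fun _ ⟨_, _, hc⟩ => hc ▸ Real.sqrt_nonneg _

lemma vnorm_mulVec_le_specNorm_mul {m n : Type*} [Fintype m] [Fintype n] (A : Matrix m n ℝ)
    (x : n → ℝ) : vnorm (A *ᵥ x) ≤ specNorm A * vnorm x := by
  classical
  have hbdd : BddAbove {c : ℝ | ∃ z : n → ℝ, vnorm z = 1 ∧ c = vnorm (A *ᵥ z)} := by
    refine ⟨‖LinearMap.toContinuousLinearMap (Matrix.toEuclideanLin A)‖, ?_⟩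
    rintro c ⟨z, hz, rfl⟩
    have := (LinearMap.toContinuousLinearMap (Matrix.toEuclideanLin A)).le_opNorm (WithLp.toLp 2 z)
    rwa [← vnorm_eq_norm_toLp, ← vnorm_eq_norm_toLp, hz, mul_one] at this
  rcases eq_or_ne x 0 with rfl | hx
  · simp [vnorm]
  have hxpos := vnorm_pos hx
  have hle : vnorm (A *ᵥ ((vnorm x)⁻¹ • x)) ≤ specNorm A :=
    le_csSup hbdd ⟨_, vnorm_inv_smul_self hx, rfl⟩
  rwa [mulVec_smul, vnorm_smul, abs_inv, abs_of_pos hxpos, inv_mul_le_iff₀ hxpos,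
    mul_comm] at hle

section topSingularPair

variable {m n : Type*} [Fintype m] [Fintype n] {T : Matrix m n ℝ} {ρ : ℝ}
  {a x : m → ℝ} {b y : n → ℝ}

lemma dotProduct_mulVec_eq_of_singularPair (hTb : T *ᵥ b = ρ • a) (hTa : Tᵀ *ᵥ a = ρ • b)
    (ha : vnorm a = 1) :
    x ⬝ᵥ T *ᵥ y = ρ * (x ⬝ᵥ a + y ⬝ᵥ b - 1) + (x - a) ⬝ᵥ T *ᵥ (y - b) := by
  have haTy : a ⬝ᵥ T *ᵥ y = ρ * (y ⬝ᵥ b) := by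
    rw [dotProduct_mulVec, ← mulVec_transpose, hTa, smul_dotProduct, smul_eq_mul,
      dotProduct_comm]
  have haa : a ⬝ᵥ a = 1 := by rw [← sq_vnorm, ha, one_pow]
  simp only [mulVec_sub, hTb, sub_dotProduct, dotProduct_sub, dotProduct_smul, smul_eq_mul,
    haTy, haa]
  ring

theorem mul_two_mul_sub_three_le_dotProduct_mulVec (hT : ∀ z, vnorm (T *ᵥ z) ≤ ρ * vnorm z)
    (hTb : T *ᵥ b = ρ • a) (hTa : Tᵀ *ᵥ a = ρ • b)
    (ha : vnorm a = 1) (hb : vnorm b = 1) (hx : vnorm x = 1) (hy : vnorm y = 1) :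
    ρ * (2 * (x ⬝ᵥ a + y ⬝ᵥ b) - 3) ≤ x ⬝ᵥ T *ᵥ y := by
  have hρ : 0 ≤ ρ := by
    have := hT b
    rw [hTb, vnorm_smul, ha, hb] at this
    linarith [abs_nonneg ρ]
  have hxa := vnorm_sub_sq x a
  have hyb := vnorm_sub_sq y b
  rw [hx, ha] at hxa
  rw [hy, hb] at hyb
  have herr : |(x - a) ⬝ᵥ T *ᵥ (y - b)| ≤ ρ * (2 - (x ⬝ᵥ a + y ⬝ᵥ b)) := by
    calc |(x - a) ⬝ᵥ T *ᵥ (y - b)| ≤ vnorm (x - a) * vnorm (T *ᵥ (y - b)) :=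
          abs_dotProduct_le_vnorm_mul_vnorm _ _
      _ ≤ vnorm (x - a) * (ρ * vnorm (y - b)) :=
          mul_le_mul_of_nonneg_left (hT _) (Real.sqrt_nonneg _)
      _ ≤ ρ * ((vnorm (x - a) ^ 2 + vnorm (y - b) ^ 2) / 2) := by
          nlinarith [mul_nonneg hρ (sq_nonneg (vnorm (x - a) - vnorm (y - b)))]
      _ = ρ * (2 - (x ⬝ᵥ a + y ⬝ᵥ b)) := by rw [hxa, hyb]; ring
  rw [dotProduct_mulVec_eq_of_singularPair hTb hTa ha]
  linarith [neg_abs_le ((x - a) ⬝ᵥ T *ᵥ (y - b))]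

end topSingularPair

theorem mul_two_mul_sub_three_le_div_of_ne_zero {m n : Type*} [Fintype m] [Fintype n]
    {T : Matrix m n ℝ} {ρ : ℝ} {a : m → ℝ} {b : n → ℝ}
    (hT : ∀ z, vnorm (T *ᵥ z) ≤ ρ * vnorm z) (hTb : T *ᵥ b = ρ • a) (hTa : Tᵀ *ᵥ a = ρ • b)
    (ha : vnorm a = 1) (hb : vnorm b = 1) {p : m → ℝ} {q : n → ℝ} (hp : p ≠ 0) (hq : q ≠ 0) :
    ρ * (2 * (p ⬝ᵥ a / vnorm p + q ⬝ᵥ b / vnorm q) - 3) ≤ p ⬝ᵥ T *ᵥ q / (vnorm p * vnorm q) := by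
  have key := mul_two_mul_sub_three_le_dotProduct_mulVec hT hTb hTa ha hb
    (vnorm_inv_smul_self hp) (vnorm_inv_smul_self hq)
  simp only [mulVec_smul, smul_dotProduct, dotProduct_smul, smul_eq_mul] at key
  convert key using 2 <;> field_simp

namespace Matrix.PosSemidef

variable {n : Type*} [Fintype n] [DecidableEq n] {S : Matrix n n ℝ} (hS : S.PosSemidef)

theorem sqrt_mul_self : hS.sqrt * hS.sqrt = S := by
  set U : Matrix n n ℝ := hS.1.eigenvectorUnitary.1
  set D : Matrix n n ℝ := diagonal (RCLike.ofReal ∘ (√·) ∘ hS.1.eigenvalues)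
  have hU : star U * U = 1 := hS.1.eigenvectorUnitary.2.1
  have hD : D * D = diagonal (RCLike.ofReal ∘ hS.1.eigenvalues) := by
    rw [diagonal_mul_diagonal]
    congr 1
    funext i
    simp [Real.mul_self_sqrt (hS.eigenvalues_nonneg i)]
  calc hS.sqrt * hS.sqrt = U * (D * (star U * U) * D) * star U := by
        simp only [Matrix.PosSemidef.sqrt, U, D, Matrix.mul_assoc]
    _ = S := by
        rw [hU, Matrix.mul_one, hD]
        exact hS.1.spectral_theorem.symm

theorem posSemidef_sqrt : hS.sqrt.PosSemidef := by
  have hD : (diagonal (RCLike.ofReal ∘ (√·) ∘ hS.1.eigenvalues) : Matrix n n ℝ).PosSemidef :=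
    posSemidef_diagonal_iff.mpr fun _ => Real.sqrt_nonneg _
  simpa [Matrix.PosSemidef.sqrt, Matrix.star_eq_conjTranspose] using
    hD.mul_mul_conjTranspose_same hS.1.eigenvectorUnitary.1

theorem transpose_sqrt : hS.sqrtᵀ = hS.sqrt := by
  rw [← conjTranspose_eq_transpose_of_trivial]
  exact hS.posSemidef_sqrt.isHermitian

lemma dotProduct_sqrt_mulVec (u w : n → ℝ) : u ⬝ᵥ hS.sqrt *ᵥ w = hS.sqrt *ᵥ u ⬝ᵥ w := by
  rw [dotProduct_mulVec, ← mulVec_transpose, transpose_sqrt]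

lemma dotProduct_mulVec_eq_sqrt (u w : n → ℝ) :
    u ⬝ᵥ S *ᵥ w = hS.sqrt *ᵥ u ⬝ᵥ hS.sqrt *ᵥ w := by
  rw [← dotProduct_sqrt_mulVec, mulVec_mulVec, sqrt_mul_self]

end Matrix.PosSemidef

namespace Matrix.PosDef

variable {n : Type*} [Fintype n] [DecidableEq n] {S : Matrix n n ℝ} (hS : S.PosDef)

lemma isUnit_det_sqrt : IsUnit hS.posSemidef.sqrt.det := by
  have hdet : hS.posSemidef.sqrt.det * hS.posSemidef.sqrt.det = S.det := by
    rw [← det_mul, PosSemidef.sqrt_mul_self]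
  exact isUnit_iff_ne_zero.mpr (left_ne_zero_of_mul (hdet ▸ hS.det_pos.ne'))

lemma dotProduct_mulVec_sqrt_inv (u a : n → ℝ) :
    u ⬝ᵥ S *ᵥ (hS.posSemidef.sqrt⁻¹ *ᵥ a) = hS.posSemidef.sqrt *ᵥ u ⬝ᵥ a := by
  rw [hS.posSemidef.dotProduct_mulVec_eq_sqrt, mulVec_mulVec,
    mul_nonsing_inv _ hS.isUnit_det_sqrt, one_mulVec]

lemma sqrt_mulVec_ne_zero {u : n → ℝ} (hu : u ≠ 0) : hS.posSemidef.sqrt *ᵥ u ≠ 0 := by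
  rw [Ne, ← mulVec_zero hS.posSemidef.sqrt]
  exact fun h => hu (mulVec_injective_iff_isUnit.mpr
    ((isUnit_iff_isUnit_det _).mpr hS.isUnit_det_sqrt) h)

end Matrix.PosDef

/-- if `(u,v)` has alignment at least `1 - η/8` with the top canonical pair
`(u*, v*)`, then its (normalized) correlation is at least `ρ₁(1-η)`. -/
theorem stmt_0 {dx dy : ℕ}
    (Sxx : Matrix (Fin dx) (Fin dx) ℝ) (Syy : Matrix (Fin dy) (Fin dy) ℝ)
    (Sxy : Matrix (Fin dx) (Fin dy) ℝ)
    (hx : Sxx.PosDef) (hy : Syy.PosDef)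
    (T : Matrix (Fin dx) (Fin dy) ℝ)
    (hT : T = (hx.posSemidef.sqrt)⁻¹ * Sxy * (hy.posSemidef.sqrt)⁻¹)
    (ρ1 : ℝ) (hρ1 : ρ1 = specNorm T)
    (a1 : Fin dx → ℝ) (b1 : Fin dy → ℝ)
    (ha1 : vnorm a1 = 1) (hb1 : vnorm b1 = 1)
    (hTb : T.mulVec b1 = ρ1 • a1) (hTa : Tᵀ.mulVec a1 = ρ1 • b1)
    (ustar : Fin dx → ℝ) (hustar : ustar = (hx.posSemidef.sqrt)⁻¹.mulVec a1)
    (vstar : Fin dy → ℝ) (hvstar : vstar = (hy.posSemidef.sqrt)⁻¹.mulVec b1)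
    (η : ℝ) (hη : η ∈ Set.Ioo (0 : ℝ) 1)
    (u : Fin dx → ℝ) (v : Fin dy → ℝ) (hu : u ≠ 0) (hv : v ≠ 0)
    (halign : (1/2) * ((u ⬝ᵥ Sxx.mulVec ustar) / vnorm (hx.posSemidef.sqrt.mulVec u)
        + (v ⬝ᵥ Syy.mulVec vstar) / vnorm (hy.posSemidef.sqrt.mulVec v)) ≥ 1 - η / 8) :
    (u ⬝ᵥ Sxy.mulVec v) /
        (Real.sqrt (u ⬝ᵥ Sxx.mulVec u) * Real.sqrt (v ⬝ᵥ Syy.mulVec v)) ≥ ρ1 * (1 - η) := by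
  set P := hx.posSemidef.sqrt
  set Q := hy.posSemidef.sqrt
  have hSxy : Sxy = P * T * Q := by
    rw [hT, Matrix.mul_assoc, Matrix.mul_assoc, nonsing_inv_mul _ hy.isUnit_det_sqrt,
      Matrix.mul_one, ← Matrix.mul_assoc, mul_nonsing_inv _ hx.isUnit_det_sqrt, Matrix.one_mul]
  have hcorr : u ⬝ᵥ Sxy *ᵥ v = P *ᵥ u ⬝ᵥ T *ᵥ (Q *ᵥ v) := by
    rw [hSxy, ← mulVec_mulVec, ← mulVec_mulVec, hx.posSemidef.dotProduct_sqrt_mulVec]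
  rw [hustar, hvstar, hx.dotProduct_mulVec_sqrt_inv, hy.dotProduct_mulVec_sqrt_inv] at halign
  rw [hcorr, hx.posSemidef.dotProduct_mulVec_eq_sqrt, hy.posSemidef.dotProduct_mulVec_eq_sqrt]
  have hwhite := mul_two_mul_sub_three_le_div_of_ne_zero
    (hρ1 ▸ vnorm_mulVec_le_specNorm_mul T) hTb hTa ha1 hb1
    (hx.sqrt_mulVec_ne_zero hu) (hy.sqrt_mulVec_ne_zero hv)
  have hρ : 0 ≤ ρ1 := hρ1 ▸ specNorm_nonneg T
  exact le_trans (mul_le_mul_of_nonneg_left (by linarith [hη.1]) hρ) hwhite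
end

section
/- Let η ∈ (0,1). Let Σxx ∈ ℝ^{dx×dx} and Σyy ∈ ℝ^{dy×dy} be symmetric positive definite, and let u* ∈ ℝ^{dx}, v* ∈ ℝ^{dy} satisfy u*ᵀΣxx u* = 1 and v*ᵀΣyy v* = 1. Let u ∈ ℝ^{dx}, v ∈ ℝ^{dy} be nonzero. If (1/√2)·( u*ᵀΣxx u + v*ᵀΣyy v ) / √( uᵀΣxx u + vᵀΣyy v ) ≥ 1 − η/4, then (1/2)·( u*ᵀΣxx u / √(uᵀΣxx u) + v*ᵀΣyy v / √(vᵀΣyy v) ) ≥ 1 − η. -/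
/-!
Write `s = √(uᵀΣxx u)`, `t = √(vᵀΣyy v)`, `a = u*ᵀΣxx u / s` and `b = v*ᵀΣyy v / t`.
Cauchy–Schwarz for the `Σ`-inner products gives `a, b ≤ 1`, and the hypothesis says that
`(a, b)·(s, t) ≥ √2 (1 - η/4) ‖(s, t)‖`. Cauchy–Schwarz in `ℝ²` then forces
`a² + b² ≥ 2 (1 - η/4)² ≥ 2 - η`, while `a ≤ 0` (or `b ≤ 0`) would cap `(a, b)·(s, t)` at
`‖(s, t)‖ < (3/4)√2 ‖(s, t)‖`. So `a, b ∈ (0, 1]`, whence `a + b ≥ a² + b² ≥ 2 - η`.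
-/

open Matrix

theorem Matrix.PosSemidef.dotProduct_mulVec_sq_le {n : Type*} [Fintype n]
    {S : Matrix n n ℝ} (hS : S.PosSemidef) (x y : n → ℝ) :
    (x ⬝ᵥ S *ᵥ y) ^ 2 ≤ (x ⬝ᵥ S *ᵥ x) * (y ⬝ᵥ S *ᵥ y) := by
  let := S.toSeminormedAddCommGroup hS
  let := S.toInnerProductSpace hS
  have hinner : ∀ a b : n → ℝ, inner ℝ a b = a ⬝ᵥ S *ᵥ b := fun a b => dotProduct_comm _ _
  simpa only [sq, hinner] using real_inner_mul_inner_self_le x y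

theorem Matrix.PosSemidef.dotProduct_mulVec_le_sqrt {n : Type*} [Fintype n]
    {S : Matrix n n ℝ} (hS : S.PosSemidef) {x : n → ℝ} (hx : x ⬝ᵥ S *ᵥ x = 1) (y : n → ℝ) :
    x ⬝ᵥ S *ᵥ y ≤ √(y ⬝ᵥ S *ᵥ y) :=
  (le_abs_self _).trans <| Real.abs_le_sqrt <| by
    simpa only [hx, one_mul] using hS.dotProduct_mulVec_sq_le x y

theorem one_sub_two_mul_le_avg_of_sq_le {a b s t ε : ℝ} (ha : a ≤ 1) (hb : b ≤ 1)
    (hs : 0 < s) (ht : 0 < t) (hε : ε ≤ 1 / 4) (hnonneg : 0 ≤ a * s + b * t)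
    (h : 2 * (1 - ε) ^ 2 * (s ^ 2 + t ^ 2) ≤ (a * s + b * t) ^ 2) :
    1 - 2 * ε ≤ (a + b) / 2 := by
  have hcs : (a * s + b * t) ^ 2 ≤ (a ^ 2 + b ^ 2) * (s ^ 2 + t ^ 2) := by
    nlinarith [sq_nonneg (a * t - b * s)]
  have hnorm : 2 * (1 - ε) ^ 2 ≤ a ^ 2 + b ^ 2 :=
    le_of_mul_le_mul_right (h.trans hcs) (by positivity)
  have hweight : 9 / 8 * (s ^ 2 + t ^ 2) ≤ (a * s + b * t) ^ 2 :=
    le_trans (by gcongr; nlinarith) h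
  have ha0 : 0 < a := by
    by_contra! ha0
    have : a * s + b * t ≤ t := by nlinarith
    nlinarith
  have hb0 : 0 < b := by
    by_contra! hb0
    have : a * s + b * t ≤ s := by nlinarith
    nlinarith
  nlinarith [mul_le_of_le_one_left ha0.le ha, mul_le_of_le_one_left hb0.le hb, sq_nonneg ε]

theorem one_sub_two_mul_le_avg_div {p q s t ε : ℝ} (hp : p ≤ s) (hq : q ≤ t)
    (hs : 0 < s) (ht : 0 < t) (hε : ε ≤ 1 / 4)
    (h : 1 - ε ≤ 1 / √2 * ((p + q) / √(s ^ 2 + t ^ 2))) :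
    1 - 2 * ε ≤ 1 / 2 * (p / s + q / t) := by
  have h1ε : 0 ≤ 1 - ε := by linarith
  have h' : (1 - ε) * (√(s ^ 2 + t ^ 2) * √2) ≤ p + q := by
    rwa [one_div_mul_eq_div, div_div, le_div_iff₀ (by positivity)] at h
  have hnonneg : 0 ≤ p + q := le_trans (by positivity) h'
  have hsq : 2 * (1 - ε) ^ 2 * (s ^ 2 + t ^ 2) ≤ (p + q) ^ 2 := by
    calc 2 * (1 - ε) ^ 2 * (s ^ 2 + t ^ 2)
        = ((1 - ε) * (√(s ^ 2 + t ^ 2) * √2)) ^ 2 := by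
          rw [mul_pow, mul_pow, Real.sq_sqrt (by positivity), Real.sq_sqrt zero_le_two]; ring
      _ ≤ (p + q) ^ 2 := pow_le_pow_left₀ (by positivity) h' 2
  have key := one_sub_two_mul_le_avg_of_sq_le (a := p / s) (b := q / t) ((div_le_one hs).2 hp)
    ((div_le_one ht).2 hq) hs ht hε
  rw [div_mul_cancel₀ p hs.ne', div_mul_cancel₀ q ht.ne'] at key
  linarith [key hnonneg hsq]

/-- conversion from joint alignment to separate alignment relative to
positive definite covariances `Σxx, Σyy`. -/
theorem stmt_4 {dx dy : ℕ} (η : ℝ) (hη : η ∈ Set.Ioo (0 : ℝ) 1)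
    (Sxx : Matrix (Fin dx) (Fin dx) ℝ) (Syy : Matrix (Fin dy) (Fin dy) ℝ)
    (hx : Sxx.PosDef) (hy : Syy.PosDef)
    (ustar : Fin dx → ℝ) (vstar : Fin dy → ℝ)
    (hus : ustar ⬝ᵥ Sxx.mulVec ustar = 1) (hvs : vstar ⬝ᵥ Syy.mulVec vstar = 1)
    (u : Fin dx → ℝ) (v : Fin dy → ℝ) (hu : u ≠ 0) (hv : v ≠ 0)
    (h : (1 / Real.sqrt 2) * ((ustar ⬝ᵥ Sxx.mulVec u + vstar ⬝ᵥ Syy.mulVec v) /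
          Real.sqrt (u ⬝ᵥ Sxx.mulVec u + v ⬝ᵥ Syy.mulVec v)) ≥ 1 - η / 4) :
    (1/2) * (ustar ⬝ᵥ Sxx.mulVec u / Real.sqrt (u ⬝ᵥ Sxx.mulVec u)
        + vstar ⬝ᵥ Syy.mulVec v / Real.sqrt (v ⬝ᵥ Syy.mulVec v)) ≥ 1 - η := by
  obtain ⟨hη0, hη1⟩ := hη
  have hA : 0 < u ⬝ᵥ Sxx *ᵥ u := by simpa using hx.re_dotProduct_pos hu
  have hB : 0 < v ⬝ᵥ Syy *ᵥ v := by simpa using hy.re_dotProduct_pos hv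
  have key := one_sub_two_mul_le_avg_div (ε := η / 4)
    (hx.posSemidef.dotProduct_mulVec_le_sqrt hus u) (hy.posSemidef.dotProduct_mulVec_le_sqrt hvs v)
    (Real.sqrt_pos.2 hA) (Real.sqrt_pos.2 hB) (by linarith)
    (by rwa [Real.sq_sqrt hA.le, Real.sq_sqrt hB.le])
  linarith
end

section
/- Let M ∈ ℝ^{d×d} be symmetric positive definite with eigenvalues β1 > β2 ≥ … ≥ βd > 0 and a corresponding orthonormal basis of eigenvectors p1, …, pd. For a nonzero vector r ∈ ℝ^d with p1ᵀ r ≠ 0, write ξi(r) = piᵀ r / ‖r‖ and define G(r) = √( Σ_{i=2}^d ξi(r)²/βi ) / √( ξ1(r)²/β1 ). Let ε ≥ 0 satisfy ε ≤ min( Σ_{i=2}^d ξi(r)²/βi , ξ1(r)²/β1 ) · (β1 − β2)² / 32, and let r' ∈ ℝ^d satisfy √( (r' − M r)ᵀ M^{-1} (r' − M r) ) ≤ √(2ε)·‖r‖. Then p1ᵀ r' ≠ 0 (in particular r' ≠ 0) and G(r') ≤ G(r) · (β1 + 3β2) / (3β1 + β2). -/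
open Matrix Finset

/-- Coefficient of the normalized vector `r/‖r‖` along the eigenvector `p i`. -/
noncomputable def xi {d : ℕ} (p : Fin (d+2) → Fin (d+2) → ℝ) (r : Fin (d+2) → ℝ)
    (i : Fin (d+2)) : ℝ :=
  (p i ⬝ᵥ r) / vnorm r

/-- The potential function
`G(r) = √(Σ_{i≥2} ξᵢ(r)²/βᵢ) / √(ξ₁(r)²/β₁)`. -/
noncomputable def Gpot {d : ℕ} (β : Fin (d+2) → ℝ) (p : Fin (d+2) → Fin (d+2) → ℝ)
    (r : Fin (d+2) → ℝ) : ℝ :=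
  Real.sqrt (∑ i ∈ Finset.univ.erase 0, (xi p r i) ^ 2 / β i) /
    Real.sqrt ((xi p r 0) ^ 2 / β 0)

lemma aux_qform {n : Type*} [Fintype n] [DecidableEq n]
    (M : Matrix n n ℝ) (β : n → ℝ) (p : n → n → ℝ)
    (hβpos : ∀ i, 0 < β i)
    (horth : ∀ i j, p i ⬝ᵥ p j = if i = j then 1 else 0)
    (heig : ∀ i, M.mulVec (p i) = β i • p i) (x : n → ℝ) :
    x ⬝ᵥ (M⁻¹).mulVec x = ∑ i, (p i ⬝ᵥ x) ^ 2 / β i := by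
  set P : Matrix n n ℝ := Matrix.of p with hP
  have hPPt : P * Pᵀ = 1 := by
    ext i j
    simpa [Matrix.mul_apply, Matrix.one_apply, dotProduct, hP] using horth i j
  have hPtP : Pᵀ * P = 1 := mul_eq_one_comm.mp hPPt
  have hMP : M * Pᵀ = Pᵀ * Matrix.diagonal β := by
    ext i j
    have h1 : (M * Pᵀ) i j = M.mulVec (p j) i := by
      simp [Matrix.mul_apply, Matrix.mulVec, dotProduct, hP]
    rw [h1, heig j, Matrix.mul_diagonal]
    simp [hP, mul_comm]
  have hDD : Matrix.diagonal β * Matrix.diagonal (fun i => (β i)⁻¹) = 1 := by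
    rw [Matrix.diagonal_mul_diagonal]
    convert Matrix.diagonal_one
    exact mul_inv_cancel₀ (hβpos _).ne'
  have hMinv : M⁻¹ = Pᵀ * Matrix.diagonal (fun i => (β i)⁻¹) * P := by
    apply Matrix.inv_eq_right_inv
    calc M * (Pᵀ * Matrix.diagonal (fun i => (β i)⁻¹) * P)
        = (M * Pᵀ) * Matrix.diagonal (fun i => (β i)⁻¹) * P := by
          simp only [Matrix.mul_assoc]
      _ = Pᵀ * (Matrix.diagonal β * Matrix.diagonal (fun i => (β i)⁻¹)) * P := by
          rw [hMP]; simp only [Matrix.mul_assoc]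
      _ = Pᵀ * P := by rw [hDD, Matrix.mul_one]
      _ = 1 := hPtP
  rw [hMinv, Matrix.dotProduct_mulVec, ← Matrix.vecMul_vecMul, ← Matrix.vecMul_vecMul,
    Matrix.vecMul_transpose, ← Matrix.dotProduct_mulVec]
  have hy : ∀ i, (P *ᵥ x) i = p i ⬝ᵥ x := by
    intro i; simp [Matrix.mulVec, hP]
  simp only [dotProduct, Matrix.vecMul_diagonal, hy]
  exact Finset.sum_congr rfl fun i _ => by rw [div_eq_mul_inv]; ring

lemma sqrt_wsum_add {ι : Type*} (s : Finset ι) (w x y : ι → ℝ) (hw : ∀ i ∈ s, 0 ≤ w i) :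
    Real.sqrt (∑ i ∈ s, w i * (x i + y i) ^ 2)
      ≤ Real.sqrt (∑ i ∈ s, w i * x i ^ 2) + Real.sqrt (∑ i ∈ s, w i * y i ^ 2) := by
  set X := ∑ i ∈ s, w i * x i ^ 2 with hX
  set Y := ∑ i ∈ s, w i * y i ^ 2 with hY
  have hX0 : 0 ≤ X := Finset.sum_nonneg fun i hi => mul_nonneg (hw i hi) (sq_nonneg _)
  have hY0 : 0 ≤ Y := Finset.sum_nonneg fun i hi => mul_nonneg (hw i hi) (sq_nonneg _)
  have hcs : ∑ i ∈ s, w i * (x i * y i) ≤ Real.sqrt X * Real.sqrt Y := by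
    have h1 := Real.sum_mul_le_sqrt_mul_sqrt s (fun i => Real.sqrt (w i) * x i)
      (fun i => Real.sqrt (w i) * y i)
    have h2 : ∀ i ∈ s, Real.sqrt (w i) * x i * (Real.sqrt (w i) * y i) = w i * (x i * y i) := by
      intro i hi
      rw [show Real.sqrt (w i) * x i * (Real.sqrt (w i) * y i)
        = Real.sqrt (w i) * Real.sqrt (w i) * (x i * y i) by ring,
        Real.mul_self_sqrt (hw i hi)]
    have h3 : ∀ i ∈ s, (Real.sqrt (w i) * x i) ^ 2 = w i * x i ^ 2 := fun i hi => by
      rw [mul_pow, Real.sq_sqrt (hw i hi)]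
    have h4 : ∀ i ∈ s, (Real.sqrt (w i) * y i) ^ 2 = w i * y i ^ 2 := fun i hi => by
      rw [mul_pow, Real.sq_sqrt (hw i hi)]
    simpa only [Finset.sum_congr rfl h2, Finset.sum_congr rfl h3, Finset.sum_congr rfl h4]
      using h1
  have hexp : ∑ i ∈ s, w i * (x i + y i) ^ 2
      = X + 2 * (∑ i ∈ s, w i * (x i * y i)) + Y := by
    rw [Finset.sum_congr rfl (fun i (_ : i ∈ s) => (by ring :
      w i * (x i + y i) ^ 2 = w i * x i ^ 2 + 2 * (w i * (x i * y i)) + w i * y i ^ 2)),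
      Finset.sum_add_distrib, Finset.sum_add_distrib, ← Finset.mul_sum]
  have hle : ∑ i ∈ s, w i * (x i + y i) ^ 2 ≤ (Real.sqrt X + Real.sqrt Y) ^ 2 := by
    rw [hexp]
    nlinarith [Real.sq_sqrt hX0, Real.sq_sqrt hY0, hcs]
  calc Real.sqrt (∑ i ∈ s, w i * (x i + y i) ^ 2)
      ≤ Real.sqrt ((Real.sqrt X + Real.sqrt Y) ^ 2) := Real.sqrt_le_sqrt hle
    _ = Real.sqrt X + Real.sqrt Y := Real.sqrt_sq (by positivity)

set_option maxHeartbeats 1000000 in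
/-- one step of inexact shift-and-invert power iteration contracts the
potential `G` by the factor `(β₁+3β₂)/(3β₁+β₂)`. -/
theorem stmt_5 {d : ℕ} (M : Matrix (Fin (d+2)) (Fin (d+2)) ℝ) (hM : M.PosDef)
    (β : Fin (d+2) → ℝ) (p : Fin (d+2) → Fin (d+2) → ℝ)
    (hβpos : ∀ i, 0 < β i) (hanti : Antitone β) (hgap : β 1 < β 0)
    (horth : ∀ i j, p i ⬝ᵥ p j = if i = j then 1 else 0)
    (heig : ∀ i, M.mulVec (p i) = β i • p i)
    (r : Fin (d+2) → ℝ) (hr : r ≠ 0) (hr1 : p 0 ⬝ᵥ r ≠ 0)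
    (ε : ℝ) (hε0 : 0 ≤ ε)
    (hε : ε ≤ min (∑ i ∈ Finset.univ.erase 0, (xi p r i) ^ 2 / β i) ((xi p r 0) ^ 2 / β 0)
        * (β 0 - β 1) ^ 2 / 32)
    (r' : Fin (d+2) → ℝ)
    (hr' : Real.sqrt ((r' - M.mulVec r) ⬝ᵥ (M⁻¹).mulVec (r' - M.mulVec r))
        ≤ Real.sqrt (2 * ε) * vnorm r) :
    p 0 ⬝ᵥ r' ≠ 0 ∧ r' ≠ 0 ∧
      Gpot β p r' ≤ Gpot β p r * ((β 0 + 3 * β 1) / (3 * β 0 + β 1)) := by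
  set a : Fin (d+2) → ℝ := fun i => p i ⬝ᵥ r with ha
  set c : Fin (d+2) → ℝ := fun i => p i ⬝ᵥ r' with hc
  set e : Fin (d+2) → ℝ := fun i => c i - β i * a i with hedef
  set g : ℝ := β 0 - β 1 with hgdef
  have hg : 0 < g := sub_pos.mpr hgap
  -- norm of r
  have hrr : 0 < r ⬝ᵥ r := by
    obtain ⟨j, hj⟩ := Function.ne_iff.mp hr
    have : 0 < ∑ i, r i * r i :=
      Finset.sum_pos' (fun i _ => mul_self_nonneg _)
        ⟨j, Finset.mem_univ j, mul_self_pos.mpr hj⟩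
    simpa [dotProduct] using this
  set n : ℝ := vnorm r with hndef
  have hn : 0 < n := Real.sqrt_pos.mpr hrr
  have hne : n ≠ 0 := ne_of_gt hn
  have hn2 : 0 < n ^ 2 := by positivity
  -- symmetry of M
  have hsymm : Mᵀ = M := by
    have := hM.1.eq
    simpa using this
  -- coefficients of the error vector
  have he : ∀ i, p i ⬝ᵥ (r' - M.mulVec r) = e i := by
    intro i
    have h1 : p i ⬝ᵥ (M.mulVec r) = β i * a i := by
      rw [Matrix.dotProduct_mulVec, ← hsymm, ← Matrix.mulVec_transpose,
        Matrix.transpose_transpose, heig i]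
      simp [ha, dotProduct, Finset.mul_sum, mul_assoc]
    simp only [dotProduct_sub, h1, hedef, hc]
  -- squared M⁻¹-norm of the error
  set E2 : ℝ := (r' - M.mulVec r) ⬝ᵥ (M⁻¹).mulVec (r' - M.mulVec r) with hE2def
  have hE2eq : E2 = ∑ i, (e i) ^ 2 / β i := by
    rw [hE2def, aux_qform M β p hβpos horth heig]
    exact Finset.sum_congr rfl fun i _ => by rw [he i]
  have hE20 : 0 ≤ E2 := by
    rw [hE2eq]
    exact Finset.sum_nonneg fun i _ => div_nonneg (sq_nonneg _) (hβpos i).le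
  have hE2le : E2 ≤ 2 * ε * n ^ 2 := by
    have h := mul_self_le_mul_self (Real.sqrt_nonneg E2) hr'
    rw [Real.mul_self_sqrt hE20] at h
    calc E2 ≤ (Real.sqrt (2*ε) * vnorm r) * (Real.sqrt (2*ε) * vnorm r) := h
      _ = (Real.sqrt (2*ε) * Real.sqrt (2*ε)) * n^2 := by rw [← hndef]; ring
      _ = 2 * ε * n ^ 2 := by rw [Real.mul_self_sqrt (by linarith)]
  -- unnormalized quantities
  set S : ℝ := ∑ i ∈ Finset.univ.erase 0, (a i) ^ 2 / β i with hSdef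
  set T : ℝ := (a 0) ^ 2 / β 0 with hTdef
  have hS0 : 0 ≤ S :=
    Finset.sum_nonneg fun i _ => div_nonneg (sq_nonneg _) (hβpos i).le
  have hT : 0 < T := div_pos ((sq_nonneg (a 0)).lt_of_ne' (pow_ne_zero 2 hr1)) (hβpos 0)
  have hxi : ∀ i, (xi p r i) ^ 2 / β i = (a i ^ 2 / β i) / n ^ 2 := by
    intro i
    show ((a i) / n) ^ 2 / β i = (a i ^ 2 / β i) / n ^ 2
    rw [div_pow]
    ring
  have hsum1 : ∑ i ∈ Finset.univ.erase 0, (xi p r i) ^ 2 / β i = S / n ^ 2 := by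
    rw [hSdef, Finset.sum_div]
    exact Finset.sum_congr rfl fun i _ => hxi i
  have hsum2 : (xi p r 0) ^ 2 / β 0 = T / n ^ 2 := hxi 0
  have hE2key : E2 ≤ min S T * g ^ 2 / 16 := by
    rw [hsum1, hsum2, min_div_div_right hn2.le] at hε
    have heq : min S T / n ^ 2 * g ^ 2 / 32 * n ^ 2 = min S T * g ^ 2 / 32 := by
      field_simp
    have h3 := mul_le_mul_of_nonneg_right hε hn2.le
    rw [heq] at h3
    linarith
  -- sqrt bounds on the error
  have hsqS : Real.sqrt E2 ≤ g / 4 * Real.sqrt S := by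
    have h1 : E2 ≤ (g / 4 * Real.sqrt S) ^ 2 := by
      have h2 : (g / 4 * Real.sqrt S) ^ 2 = S * g ^ 2 / 16 := by
        rw [mul_pow, Real.sq_sqrt hS0]; ring
      rw [h2]
      refine hE2key.trans ?_
      gcongr
      exact min_le_left _ _
    calc Real.sqrt E2 ≤ Real.sqrt ((g / 4 * Real.sqrt S) ^ 2) := Real.sqrt_le_sqrt h1
      _ = g / 4 * Real.sqrt S := Real.sqrt_sq
          (mul_nonneg (by linarith : (0:ℝ) ≤ g / 4) (Real.sqrt_nonneg _))
  have hsqT : Real.sqrt E2 ≤ g / 4 * Real.sqrt T := by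
    have h1 : E2 ≤ (g / 4 * Real.sqrt T) ^ 2 := by
      have h2 : (g / 4 * Real.sqrt T) ^ 2 = T * g ^ 2 / 16 := by
        rw [mul_pow, Real.sq_sqrt hT.le]; ring
      rw [h2]
      refine hE2key.trans ?_
      gcongr
      exact min_le_right _ _
    calc Real.sqrt E2 ≤ Real.sqrt ((g / 4 * Real.sqrt T) ^ 2) := Real.sqrt_le_sqrt h1
      _ = g / 4 * Real.sqrt T := Real.sqrt_sq
          (mul_nonneg (by linarith : (0:ℝ) ≤ g / 4) (Real.sqrt_nonneg _))
  -- numerator bound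
  set A : ℝ := Real.sqrt (∑ i ∈ Finset.univ.erase 0, (c i) ^ 2 / β i) with hAdef
  have hA0 : 0 ≤ A := Real.sqrt_nonneg _
  have hA : A ≤ (β 0 + 3 * β 1) / 4 * Real.sqrt S := by
    have hconv : ∀ i ∈ Finset.univ.erase 0,
        (c i) ^ 2 / β i = (β i)⁻¹ * ((β i * a i) + e i) ^ 2 := by
      intro i _
      have hce : β i * a i + e i = c i := by simp only [hedef]; ring
      rw [hce, div_eq_mul_inv, mul_comm]
    rw [hAdef, Finset.sum_congr rfl hconv]
    have htri := sqrt_wsum_add (Finset.univ.erase 0) (fun i => (β i)⁻¹)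
      (fun i => β i * a i) e (fun i _ => inv_nonneg.mpr (hβpos i).le)
    refine htri.trans ?_
    have hx : Real.sqrt (∑ i ∈ Finset.univ.erase 0, (β i)⁻¹ * (β i * a i) ^ 2)
        ≤ β 1 * Real.sqrt S := by
      have hb : ∀ i ∈ Finset.univ.erase 0,
          (β i)⁻¹ * (β i * a i) ^ 2 ≤ (β 1) ^ 2 * (a i ^ 2 / β i) := by
        intro i hi
        have hi0 : i ≠ 0 := Finset.ne_of_mem_erase hi
        have h1i : (1 : Fin (d+2)) ≤ i := by
          have hv : 0 < i.val := by
            rcases Nat.eq_zero_or_pos i.val with h | h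
            · exact absurd (Fin.ext h) hi0
            · exact h
          rw [Fin.le_def, Fin.val_one]
          omega
        have hβi : β i ≤ β 1 := hanti h1i
        have he1 : (β i)⁻¹ * (β i * a i) ^ 2 = (β i) ^ 2 * (a i ^ 2 / β i) := by
          field_simp
        rw [he1]
        exact mul_le_mul_of_nonneg_right (pow_le_pow_left₀ (hβpos i).le hβi 2)
          (div_nonneg (sq_nonneg _) (hβpos i).le)
      calc Real.sqrt (∑ i ∈ Finset.univ.erase 0, (β i)⁻¹ * (β i * a i) ^ 2)
          ≤ Real.sqrt ((β 1) ^ 2 * S) := by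
            apply Real.sqrt_le_sqrt
            rw [hSdef, Finset.mul_sum]
            exact Finset.sum_le_sum hb
        _ = β 1 * Real.sqrt S := by
            rw [Real.sqrt_mul (sq_nonneg _), Real.sqrt_sq (hβpos 1).le]
    have hy : Real.sqrt (∑ i ∈ Finset.univ.erase 0, (β i)⁻¹ * (e i) ^ 2)
        ≤ Real.sqrt E2 := by
      apply Real.sqrt_le_sqrt
      have h1 : ∑ i ∈ Finset.univ.erase 0, (β i)⁻¹ * (e i) ^ 2
          = ∑ i ∈ Finset.univ.erase 0, (e i) ^ 2 / β i :=
        Finset.sum_congr rfl fun i _ => by rw [div_eq_mul_inv, mul_comm]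
      rw [h1, hE2eq]
      refine Finset.sum_le_sum_of_subset_of_nonneg (Finset.subset_univ _) ?_
      intro i _ _
      exact div_nonneg (sq_nonneg _) (hβpos i).le
    have hfin : β 1 * Real.sqrt S + g / 4 * Real.sqrt S
        = (β 0 + 3 * β 1) / 4 * Real.sqrt S := by
      rw [hgdef]; ring
    have := add_le_add hx (hy.trans hsqS)
    linarith
  -- denominator bound
  set B : ℝ := Real.sqrt ((c 0) ^ 2 / β 0) with hBdef
  have hsqβ0 : 0 < Real.sqrt (β 0) := Real.sqrt_pos.mpr (hβpos 0)
  have hBeq : B = |c 0| / Real.sqrt (β 0) := by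
    rw [hBdef, Real.sqrt_div (sq_nonneg _), Real.sqrt_sq_eq_abs]
  have hTeq : Real.sqrt T = |a 0| / Real.sqrt (β 0) := by
    rw [hTdef, Real.sqrt_div (sq_nonneg _), Real.sqrt_sq_eq_abs]
  have hsqTpos : 0 < Real.sqrt T := Real.sqrt_pos.mpr hT
  have he0 : |e 0| / Real.sqrt (β 0) ≤ g / 4 * Real.sqrt T := by
    have h1 : (e 0) ^ 2 / β 0 ≤ E2 := by
      rw [hE2eq]
      exact Finset.single_le_sum (f := fun i => (e i) ^ 2 / β i)
        (fun i _ => div_nonneg (sq_nonneg _) (hβpos i).le) (Finset.mem_univ 0)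
    calc |e 0| / Real.sqrt (β 0) = Real.sqrt ((e 0) ^ 2 / β 0) := by
          rw [Real.sqrt_div (sq_nonneg _), Real.sqrt_sq_eq_abs]
      _ ≤ Real.sqrt E2 := Real.sqrt_le_sqrt h1
      _ ≤ g / 4 * Real.sqrt T := hsqT
  have hc0abs : β 0 * |a 0| - |e 0| ≤ |c 0| := by
    have h2 : β 0 * a 0 = c 0 + (- e 0) := by simp only [hedef]; ring
    have h1 : |β 0 * a 0| ≤ |c 0| + |e 0| := by
      rw [h2]
      calc |c 0 + -e 0| ≤ |c 0| + |-e 0| := abs_add_le _ _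
        _ = |c 0| + |e 0| := by rw [abs_neg]
    rw [abs_mul, abs_of_pos (hβpos 0)] at h1
    linarith
  have hB : (3 * β 0 + β 1) / 4 * Real.sqrt T ≤ B := by
    have h1 : (β 0 * |a 0| - |e 0|) / Real.sqrt (β 0) ≤ B := by
      rw [hBeq]
      gcongr
    refine le_trans ?_ h1
    rw [sub_div]
    have h2 : β 0 * |a 0| / Real.sqrt (β 0) = β 0 * Real.sqrt T := by
      rw [hTeq]; ring
    rw [h2]
    have h4 : (3 * β 0 + β 1) / 4 * Real.sqrt T
        = β 0 * Real.sqrt T - g / 4 * Real.sqrt T := by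
      rw [hgdef]; ring
    linarith
  have hDpos : 0 < (3 * β 0 + β 1) / 4 * Real.sqrt T :=
    mul_pos (by linarith [hβpos 0, hβpos 1]) hsqTpos
  have hBpos : 0 < B := lt_of_lt_of_le hDpos hB
  -- p 0 ⬝ᵥ r' ≠ 0 and r' ≠ 0
  have hc0 : c 0 ≠ 0 := by
    intro h
    have hB0 : B = 0 := by rw [hBdef, h]; simp
    rw [hB0] at hBpos
    exact lt_irrefl 0 hBpos
  have hr'0 : r' ≠ 0 := by
    intro h
    apply hc0
    have : c 0 = p 0 ⬝ᵥ r' := rfl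
    rw [this, h, dotProduct_zero]
  refine ⟨hc0, hr'0, ?_⟩
  -- Gpot identities
  have hGr : Gpot β p r = Real.sqrt S / Real.sqrt T := by
    unfold Gpot
    rw [hsum1, hsum2, Real.sqrt_div hS0, Real.sqrt_div hT.le, Real.sqrt_sq hn.le,
      div_div_div_comm, div_self hne, div_one]
  have hrr' : 0 < r' ⬝ᵥ r' := by
    obtain ⟨j, hj⟩ := Function.ne_iff.mp hr'0
    have : 0 < ∑ i, r' i * r' i :=
      Finset.sum_pos' (fun i _ => mul_self_nonneg _)
        ⟨j, Finset.mem_univ j, mul_self_pos.mpr hj⟩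
    simpa [dotProduct] using this
  have hn' : 0 < vnorm r' := Real.sqrt_pos.mpr hrr'
  have hne' : vnorm r' ≠ 0 := ne_of_gt hn'
  have hxi' : ∀ i, (xi p r' i) ^ 2 / β i = (c i ^ 2 / β i) / (vnorm r') ^ 2 := by
    intro i
    show ((c i) / vnorm r') ^ 2 / β i = (c i ^ 2 / β i) / (vnorm r') ^ 2
    rw [div_pow]
    ring
  have hGr' : Gpot β p r' = A / B := by
    unfold Gpot
    have hsum1' : ∑ i ∈ Finset.univ.erase 0, (xi p r' i) ^ 2 / β i
        = (∑ i ∈ Finset.univ.erase 0, (c i) ^ 2 / β i) / (vnorm r') ^ 2 := by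
      rw [Finset.sum_div]
      exact Finset.sum_congr rfl fun i _ => hxi' i
    have hAS0 : 0 ≤ ∑ i ∈ Finset.univ.erase 0, (c i) ^ 2 / β i :=
      Finset.sum_nonneg fun i _ => div_nonneg (sq_nonneg _) (hβpos i).le
    rw [hsum1', hxi' 0, Real.sqrt_div hAS0,
      Real.sqrt_div (div_nonneg (sq_nonneg (c 0)) (hβpos 0).le),
      Real.sqrt_sq hn'.le, div_div_div_comm, div_self hne', div_one, hAdef, hBdef]
  rw [hGr, hGr']
  -- final comparison
  have h1 : A / B ≤ ((β 0 + 3 * β 1) / 4 * Real.sqrt S)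
      / ((3 * β 0 + β 1) / 4 * Real.sqrt T) :=
    div_le_div₀ (mul_nonneg (by linarith [hβpos 0, hβpos 1]) (Real.sqrt_nonneg _))
      hA hDpos hB
  have h2 : ((β 0 + 3 * β 1) / 4 * Real.sqrt S) / ((3 * β 0 + β 1) / 4 * Real.sqrt T)
      = Real.sqrt S / Real.sqrt T * ((β 0 + 3 * β 1) / (3 * β 0 + β 1)) := by
    have hβ01 : (3 * β 0 + β 1) ≠ 0 := by
      have h0 := hβpos 0; have h1' := hβpos 1; linarith
    have hTne : Real.sqrt T ≠ 0 := ne_of_gt hsqTpos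
    field_simp
  rw [h2] at h1
  exact h1
end

section
/- Let M ∈ ℝ^{d×d} be symmetric positive definite with eigenvalues β1 > β2 ≥ … ≥ βd > 0 satisfying 2β2 ≤ β1, and a corresponding orthonormal basis of eigenvectors p1, …, pd. Let r0, r1, r2, … be a sequence of nonzero vectors in ℝ^d with p1ᵀ r0 ≠ 0 such that for every t there exists ε_t ≥ 0 with ε_t ≤ min( Σ_{i=2}^d ξi(r_t)²/βi , ξ1(r_t)²/β1 ) · (β1 − β2)² / 32 and √( (r_{t+1} − M r_t)ᵀ M^{-1} (r_{t+1} − M r_t) ) ≤ √(2 ε_t)·‖r_t‖, where ξi(r) = piᵀ r / ‖r‖ and G(r) = √( Σ_{i=2}^d ξi(r)²/βi ) / √( ξ1(r)²/β1 ). Then for every η ∈ (0,1) and every t ≥ 0 with (5/7)^t · G(r0) ≤ η, one has p1ᵀ r_t ≠ 0 and √( Σ_{i=2}^d ξi(r_t)² ) ≤ G(r_t) ≤ η. -/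
open Matrix Finset

/-!
In the eigenbasis `p` the exact iteration `r ↦ M r` multiplies the `i`-th coordinate by `β i`,
so it shrinks the ratio `G = √(tail energy) / √(head energy)` (energies weighted by `β⁻¹`) by
the factor `β 1 / β 0 ≤ 1/2`. The error `e = r_{t+1} - M r_t` is measured in the `M⁻¹`-norm,
whose square is exactly the sum of the two energies of `e`; the accuracy condition bounds it
by `(β 0 - β 1) / 4` times the square root of either energy of `r_t`. Minkowski's inequality
for the tail and the reverse triangle inequality for the head then give the contraction factor
`(β 0 + 3 β 1) / (3 β 0 + β 1) ≤ 5/7`. Finally `G ≥ |sin θ|` because `β i ≤ β 0` and the head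
coordinate of a unit vector is at most `1`.
-/

theorem Real.sqrt_sum_add_sq_le {ι : Type*} (s : Finset ι) (a b : ι → ℝ) :
    √(∑ i ∈ s, (a i + b i) ^ 2) ≤ √(∑ i ∈ s, a i ^ 2) + √(∑ i ∈ s, b i ^ 2) := by
  have h := norm_add_le (WithLp.toLp 2 (fun i : s => a i) : EuclideanSpace ℝ s)
    (WithLp.toLp 2 fun i : s => b i)
  simp only [EuclideanSpace.norm_eq, Real.norm_eq_abs, sq_abs] at h
  simpa only [← WithLp.toLp_add, PiLp.toLp_apply, Pi.add_apply,
    Finset.sum_coe_sort s (fun i => (a i + b i) ^ 2), Finset.sum_coe_sort s (fun i => a i ^ 2),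
    Finset.sum_coe_sort s (fun i => b i ^ 2)] using h

theorem vnorm_ne_zero {n : Type*} [Fintype n] {x : n → ℝ} (hx : x ≠ 0) : vnorm x ≠ 0 :=
  Real.sqrt_ne_zero'.mpr (dotProduct_self_star_pos_iff.mpr hx)

theorem xi_eq_smul {d : ℕ} (p : Fin (d+2) → Fin (d+2) → ℝ) (r : Fin (d+2) → ℝ) :
    xi p r = (vnorm r)⁻¹ • fun i => p i ⬝ᵥ r := by
  funext i
  simp only [xi, Pi.smul_apply, smul_eq_mul, inv_mul_eq_div]

section EigenCoordinates

variable {n : Type*} [Fintype n] {p : n → n → ℝ}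

theorem dotProduct_eq_sum_mul_of_orthonormal [DecidableEq n]
    (horth : ∀ i j, p i ⬝ᵥ p j = if i = j then 1 else 0) (v w : n → ℝ) :
    v ⬝ᵥ w = ∑ i, (p i ⬝ᵥ v) * (p i ⬝ᵥ w) := by
  have hPPt : of p * (of p)ᵀ = 1 := by
    ext i j
    simpa [mul_apply, one_apply, dotProduct] using horth i j
  calc v ⬝ᵥ w = ((of p)ᵀ * of p) *ᵥ v ⬝ᵥ w := by rw [mul_eq_one_comm.mp hPPt, one_mulVec]
    _ = (of p *ᵥ v) ⬝ᵥ (of p *ᵥ w) := by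
      rw [← mulVec_mulVec, mulVec_transpose, ← dotProduct_mulVec]
    _ = ∑ i, (p i ⬝ᵥ v) * (p i ⬝ᵥ w) := rfl

theorem sq_dotProduct_le_of_orthonormal [DecidableEq n]
    (horth : ∀ i j, p i ⬝ᵥ p j = if i = j then 1 else 0) (i : n) (v : n → ℝ) :
    (p i ⬝ᵥ v) ^ 2 ≤ v ⬝ᵥ v := by
  rw [dotProduct_eq_sum_mul_of_orthonormal horth v v]
  simpa only [sq] using
    single_le_sum (f := fun j => (p j ⬝ᵥ v) * (p j ⬝ᵥ v)) (fun j _ => mul_self_nonneg _)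
      (mem_univ i)

variable {M : Matrix n n ℝ} {β : n → ℝ}

theorem dotProduct_mulVec_of_eigen (hM : Mᵀ = M) {i : n} (heig : M *ᵥ p i = β i • p i)
    (v : n → ℝ) : p i ⬝ᵥ (M *ᵥ v) = β i * (p i ⬝ᵥ v) := by
  rw [dotProduct_mulVec, ← mulVec_transpose, hM, heig, smul_dotProduct, smul_eq_mul]

theorem dotProduct_inv_mulVec_of_eigen [DecidableEq n] (hM : Mᵀ = M) (hdet : IsUnit M.det) {i : n}
    (heig : M *ᵥ p i = β i • p i) (hβ : β i ≠ 0) (v : n → ℝ) :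
    p i ⬝ᵥ (M⁻¹ *ᵥ v) = (p i ⬝ᵥ v) / β i := by
  rw [eq_div_iff hβ, mul_comm, ← dotProduct_mulVec_of_eigen hM heig, mulVec_mulVec,
    mul_nonsing_inv M hdet, one_mulVec]

theorem dotProduct_inv_mulVec_self_eq_sum [DecidableEq n]
    (horth : ∀ i j, p i ⬝ᵥ p j = if i = j then 1 else 0)
    (hM : Mᵀ = M) (hdet : IsUnit M.det) (heig : ∀ i, M *ᵥ p i = β i • p i)
    (hβ : ∀ i, β i ≠ 0) (v : n → ℝ) :
    v ⬝ᵥ M⁻¹ *ᵥ v = ∑ i, (p i ⬝ᵥ v) ^ 2 / β i := by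
  rw [dotProduct_eq_sum_mul_of_orthonormal horth]
  refine sum_congr rfl fun i _ => ?_
  rw [dotProduct_inv_mulVec_of_eigen hM hdet (heig i) (hβ i), sq, mul_div_assoc]

end EigenCoordinates

section Potential

variable {d : ℕ} (β : Fin (d+2) → ℝ)

noncomputable def tailEnergy (x : Fin (d+2) → ℝ) : ℝ := ∑ i ∈ univ.erase 0, x i ^ 2 / β i

noncomputable def potential (x : Fin (d+2) → ℝ) : ℝ := √(tailEnergy β x) / √(x 0 ^ 2 / β 0)

theorem Gpot_eq_potential_xi (p : Fin (d+2) → Fin (d+2) → ℝ) (r : Fin (d+2) → ℝ) :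
    Gpot β p r = potential β (xi p r) := rfl

theorem tailEnergy_smul (c : ℝ) (x : Fin (d+2) → ℝ) :
    tailEnergy β (c • x) = c ^ 2 * tailEnergy β x := by
  simp only [tailEnergy, mul_sum, Pi.smul_apply, smul_eq_mul, mul_pow, mul_div_assoc]

theorem potential_smul {c : ℝ} (hc : c ≠ 0) (x : Fin (d+2) → ℝ) :
    potential β (c • x) = potential β x := by
  rw [potential, potential, tailEnergy_smul, Pi.smul_apply, smul_eq_mul, mul_pow, mul_div_assoc,
    Real.sqrt_mul (sq_nonneg c), Real.sqrt_mul (sq_nonneg c), Real.sqrt_sq_eq_abs,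
    mul_div_mul_left _ _ (abs_ne_zero.mpr hc)]

theorem Gpot_eq_potential (p : Fin (d+2) → Fin (d+2) → ℝ) {r : Fin (d+2) → ℝ} (hr : r ≠ 0) :
    Gpot β p r = potential β (fun i => p i ⬝ᵥ r) := by
  rw [Gpot_eq_potential_xi, xi_eq_smul, potential_smul β (inv_ne_zero (vnorm_ne_zero hr))]

variable {β}

theorem sqrt_tailEnergy_add_le (hβpos : ∀ i, 0 < β i) (hanti : Antitone β) (x e : Fin (d+2) → ℝ) :
    √(tailEnergy β (fun i => β i * x i + e i)) ≤
      β 1 * √(tailEnergy β x) + √(∑ i, e i ^ 2 / β i) := by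
  have hsplit : ∀ i, (β i * x i + e i) ^ 2 / β i = (√(β i) * x i + e i / √(β i)) ^ 2 := by
    intro i
    have hs := Real.sqrt_pos.mpr (hβpos i)
    have hβ := Real.sq_sqrt (hβpos i).le
    generalize √(β i) = s at hs hβ ⊢
    rw [← hβ]
    field_simp
  have hmain : ∑ i ∈ univ.erase 0, (√(β i) * x i) ^ 2 ≤ β 1 ^ 2 * tailEnergy β x := by
    rw [tailEnergy, mul_sum]
    refine sum_le_sum fun i hi => ?_
    have hβi : β i ≤ β 1 := hanti (Fin.one_le_of_ne_zero (ne_of_mem_erase hi))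
    rw [mul_pow, Real.sq_sqrt (hβpos i).le, mul_div_assoc', le_div_iff₀ (hβpos i)]
    nlinarith [mul_le_mul_of_nonneg_right (pow_le_pow_left₀ (hβpos i).le hβi 2) (sq_nonneg (x i))]
  have herr : ∑ i ∈ univ.erase 0, (e i / √(β i)) ^ 2 ≤ ∑ i, e i ^ 2 / β i := by
    simp only [div_pow, Real.sq_sqrt (hβpos _).le]
    exact sum_le_sum_of_subset_of_nonneg (subset_univ _)
      fun i _ _ => div_nonneg (sq_nonneg _) (hβpos i).le
  calc √(tailEnergy β (fun i => β i * x i + e i))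
      = √(∑ i ∈ univ.erase 0, (√(β i) * x i + e i / √(β i)) ^ 2) := by
        simp only [tailEnergy, hsplit]
    _ ≤ √(∑ i ∈ univ.erase 0, (√(β i) * x i) ^ 2) + √(∑ i ∈ univ.erase 0, (e i / √(β i)) ^ 2) :=
        Real.sqrt_sum_add_sq_le _ _ _
    _ ≤ √(β 1 ^ 2 * tailEnergy β x) + √(∑ i, e i ^ 2 / β i) := by gcongr
    _ = β 1 * √(tailEnergy β x) + √(∑ i, e i ^ 2 / β i) := by
        rw [Real.sqrt_mul (sq_nonneg _), Real.sqrt_sq (hβpos 1).le]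

theorem sqrt_head_add_ge (hβpos : ∀ i, 0 < β i) (x e : Fin (d+2) → ℝ) :
    β 0 * √(x 0 ^ 2 / β 0) - √(∑ i, e i ^ 2 / β i) ≤ √((β 0 * x 0 + e 0) ^ 2 / β 0) := by
  have hs := Real.sqrt_pos.mpr (hβpos 0)
  have he : √(e 0 ^ 2 / β 0) ≤ √(∑ i, e i ^ 2 / β i) :=
    Real.sqrt_le_sqrt (single_le_sum (f := fun i => e i ^ 2 / β i)
      (fun i _ => div_nonneg (sq_nonneg _) (hβpos i).le) (mem_univ 0))
  have htri : β 0 * |x 0| - |e 0| ≤ |β 0 * x 0 + e 0| := by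
    have := abs_sub_abs_le_abs_sub (β 0 * x 0) (-e 0)
    rwa [abs_neg, sub_neg_eq_add, abs_mul, abs_of_pos (hβpos 0)] at this
  simp only [Real.sqrt_div' _ (hβpos 0).le, Real.sqrt_sq_eq_abs] at he ⊢
  calc β 0 * (|x 0| / √(β 0)) - √(∑ i, e i ^ 2 / β i)
      ≤ β 0 * (|x 0| / √(β 0)) - |e 0| / √(β 0) := by linarith
    _ = (β 0 * |x 0| - |e 0|) / √(β 0) := by ring
    _ ≤ |β 0 * x 0 + e 0| / √(β 0) := by gcongr

theorem potential_step (hβpos : ∀ i, 0 < β i) (hanti : Antitone β) (hhalf : 2 * β 1 ≤ β 0)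
    {x e : Fin (d+2) → ℝ} (hx0 : x 0 ≠ 0)
    (hE : √(∑ i, e i ^ 2 / β i) ≤ (β 0 - β 1) / 4 * √(min (tailEnergy β x) (x 0 ^ 2 / β 0))) :
    β 0 * x 0 + e 0 ≠ 0 ∧ potential β (fun i => β i * x i + e i) ≤ 5 / 7 * potential β x := by
  have h0 := hβpos 0
  have h1 := hβpos 1
  set A := √(tailEnergy β x)
  set B := √(x 0 ^ 2 / β 0)
  have hB : 0 < B := Real.sqrt_pos.mpr (div_pos (pow_two_pos_of_ne_zero hx0) h0)
  have hgap : 0 ≤ (β 0 - β 1) / 4 := by linarith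
  have hEA : √(∑ i, e i ^ 2 / β i) ≤ (β 0 - β 1) / 4 * A :=
    hE.trans (mul_le_mul_of_nonneg_left (Real.sqrt_le_sqrt (min_le_left _ _)) hgap)
  have hEB : √(∑ i, e i ^ 2 / β i) ≤ (β 0 - β 1) / 4 * B :=
    hE.trans (mul_le_mul_of_nonneg_left (Real.sqrt_le_sqrt (min_le_right _ _)) hgap)
  have hnum : √(tailEnergy β (fun i => β i * x i + e i)) ≤ (β 0 + 3 * β 1) / 4 * A := by
    linarith [sqrt_tailEnergy_add_le hβpos hanti x e]
  have hden : (3 * β 0 + β 1) / 4 * B ≤ √((β 0 * x 0 + e 0) ^ 2 / β 0) := by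
    linarith [sqrt_head_add_ge hβpos x e]
  have hden_pos : 0 < (3 * β 0 + β 1) / 4 * B := mul_pos (by linarith) hB
  refine ⟨fun hy0 => ?_, ?_⟩
  · rw [hy0, zero_pow two_ne_zero, zero_div, Real.sqrt_zero] at hden
    linarith
  calc potential β (fun i => β i * x i + e i)
      ≤ (β 0 + 3 * β 1) / 4 * A / ((3 * β 0 + β 1) / 4 * B) :=
        div_le_div₀ (mul_nonneg (by linarith) (Real.sqrt_nonneg _)) hnum hden_pos hden
    _ = (β 0 + 3 * β 1) / (3 * β 0 + β 1) * (A / B) := by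
        field_simp
    _ ≤ 5 / 7 * (A / B) := by
        refine mul_le_mul_of_nonneg_right ?_ (div_nonneg (Real.sqrt_nonneg _) hB.le)
        rw [div_le_div_iff₀ (by linarith) (by norm_num)]
        linarith

theorem sqrt_sum_sq_le_potential (hβpos : ∀ i, 0 < β i) (hanti : Antitone β)
    {ξ : Fin (d+2) → ℝ} (hξ0 : ξ 0 ≠ 0) (hξ1 : ξ 0 ^ 2 ≤ 1) :
    √(∑ i ∈ univ.erase 0, ξ i ^ 2) ≤ potential β ξ := by
  have h0 := hβpos 0
  have hnum : (∑ i ∈ univ.erase 0, ξ i ^ 2) / β 0 ≤ tailEnergy β ξ := by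
    rw [sum_div]
    exact sum_le_sum fun i _ =>
      div_le_div_of_nonneg_left (sq_nonneg _) (hβpos i) (hanti (Fin.zero_le i))
  calc √(∑ i ∈ univ.erase 0, ξ i ^ 2)
      = √((∑ i ∈ univ.erase 0, ξ i ^ 2) / β 0) / √(1 / β 0) := by
        rw [Real.sqrt_div' _ h0.le, Real.sqrt_div' _ h0.le, Real.sqrt_one,
          div_div_div_cancel_right₀ (Real.sqrt_pos.mpr h0).ne', div_one]
    _ ≤ potential β ξ :=
        div_le_div₀ (Real.sqrt_nonneg _) (Real.sqrt_le_sqrt hnum)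
          (Real.sqrt_pos.mpr (div_pos (pow_two_pos_of_ne_zero hξ0) h0))
          (Real.sqrt_le_sqrt (div_le_div_of_nonneg_right hξ1 h0.le))

end Potential

section Iteration

variable {d : ℕ} {β : Fin (d+2) → ℝ} {p : Fin (d+2) → Fin (d+2) → ℝ}

theorem sqrt_two_mul_mul_vnorm_le (hgap : β 1 ≤ β 0) {u : Fin (d+2) → ℝ} (hu : u ≠ 0) {ε : ℝ}
    (hεle : ε ≤ min (tailEnergy β (xi p u)) (xi p u 0 ^ 2 / β 0) * (β 0 - β 1) ^ 2 / 32) :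
    √(2 * ε) * vnorm u ≤
      (β 0 - β 1) / 4 * √(min (tailEnergy β fun i => p i ⬝ᵥ u) ((p 0 ⬝ᵥ u) ^ 2 / β 0)) := by
  set m := min (tailEnergy β fun i => p i ⬝ᵥ u) ((p 0 ⬝ᵥ u) ^ 2 / β 0)
  have hn : 0 < vnorm u := (Real.sqrt_nonneg _).lt_of_ne' (vnorm_ne_zero hu)
  rw [xi_eq_smul, tailEnergy_smul, Pi.smul_apply, smul_eq_mul, mul_pow,
    mul_div_assoc _ ((p 0 ⬝ᵥ u) ^ 2), ← mul_min_of_nonneg _ _ (sq_nonneg _)] at hεle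
  calc √(2 * ε) * vnorm u = √(2 * ε * vnorm u ^ 2) := by
        rw [Real.sqrt_mul' _ (sq_nonneg _), Real.sqrt_sq hn.le]
    _ ≤ √(((β 0 - β 1) / 4) ^ 2 * m) := by
        refine Real.sqrt_le_sqrt ?_
        calc 2 * ε * vnorm u ^ 2
            ≤ 2 * ((vnorm u)⁻¹ ^ 2 * m * (β 0 - β 1) ^ 2 / 32) * vnorm u ^ 2 := by gcongr
          _ = ((β 0 - β 1) / 4) ^ 2 * m := by field_simp; ring
    _ = (β 0 - β 1) / 4 * √m := by
        rw [Real.sqrt_mul (sq_nonneg _), Real.sqrt_sq (by linarith)]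

theorem Gpot_step {M : Matrix (Fin (d+2)) (Fin (d+2)) ℝ} (hM : M.PosDef)
    (hβpos : ∀ i, 0 < β i) (hanti : Antitone β) (hhalf : 2 * β 1 ≤ β 0)
    (horth : ∀ i j, p i ⬝ᵥ p j = if i = j then 1 else 0)
    (heig : ∀ i, M *ᵥ p i = β i • p i) {u v : Fin (d+2) → ℝ} (hu0 : p 0 ⬝ᵥ u ≠ 0) {ε : ℝ}
    (hεle : ε ≤ min (tailEnergy β (xi p u)) (xi p u 0 ^ 2 / β 0) * (β 0 - β 1) ^ 2 / 32)
    (herr : √((v - M *ᵥ u) ⬝ᵥ M⁻¹ *ᵥ (v - M *ᵥ u)) ≤ √(2 * ε) * vnorm u) :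
    p 0 ⬝ᵥ v ≠ 0 ∧ Gpot β p v ≤ 5 / 7 * Gpot β p u := by
  have hu : u ≠ 0 := fun h => hu0 (h ▸ dotProduct_zero _)
  have hsym : Mᵀ = M := hM.isHermitian.eq
  have hdet : IsUnit M.det := (isUnit_iff_isUnit_det M).mp hM.isUnit
  have hv : (fun i => p i ⬝ᵥ v) = fun i => β i * (p i ⬝ᵥ u) + p i ⬝ᵥ (v - M *ᵥ u) := by
    funext i
    rw [dotProduct_sub, dotProduct_mulVec_of_eigen hsym (heig i)]
    ring
  have hE := herr.trans (sqrt_two_mul_mul_vnorm_le (by linarith [hβpos 1]) hu hεle)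
  rw [dotProduct_inv_mulVec_self_eq_sum horth hsym hdet heig fun i => (hβpos i).ne'] at hE
  obtain ⟨hv0, hcontract⟩ := potential_step hβpos hanti hhalf hu0 hE
  rw [← congrFun hv 0] at hv0
  have hvne : v ≠ 0 := fun h => hv0 (h ▸ dotProduct_zero _)
  refine ⟨hv0, ?_⟩
  rwa [Gpot_eq_potential β p hvne, Gpot_eq_potential β p hu, hv]

theorem sq_xi_le_one (horth : ∀ i j, p i ⬝ᵥ p j = if i = j then 1 else 0) (r : Fin (d+2) → ℝ)
    (i : Fin (d+2)) : xi p r i ^ 2 ≤ 1 := by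
  have hrr : 0 ≤ r ⬝ᵥ r := dotProduct_self_star_nonneg r
  rw [xi, div_pow, vnorm, Real.sq_sqrt hrr]
  exact div_le_one_of_le₀ (sq_dotProduct_le_of_orthonormal horth i r) hrr

end Iteration

theorem stmt_6_general {d : ℕ} (M : Matrix (Fin (d+2)) (Fin (d+2)) ℝ) (hM : M.PosDef)
    (β : Fin (d+2) → ℝ) (p : Fin (d+2) → Fin (d+2) → ℝ)
    (hβpos : ∀ i, 0 < β i) (hanti : Antitone β)
    (hhalf : 2 * β 1 ≤ β 0)
    (horth : ∀ i j, p i ⬝ᵥ p j = if i = j then 1 else 0)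
    (heig : ∀ i, M.mulVec (p i) = β i • p i)
    (r : ℕ → Fin (d+2) → ℝ) (hr0 : p 0 ⬝ᵥ r 0 ≠ 0)
    (hstep : ∀ t : ℕ, ∃ ε : ℝ, 0 ≤ ε ∧
        ε ≤ min (∑ i ∈ Finset.univ.erase 0, (xi p (r t) i) ^ 2 / β i)
              ((xi p (r t) 0) ^ 2 / β 0) * (β 0 - β 1) ^ 2 / 32 ∧
        Real.sqrt ((r (t+1) - M.mulVec (r t)) ⬝ᵥ (M⁻¹).mulVec (r (t+1) - M.mulVec (r t)))
          ≤ Real.sqrt (2 * ε) * vnorm (r t)) :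
    ∀ η : ℝ, η ∈ Set.Ioo (0 : ℝ) 1 → ∀ t : ℕ, ((5 : ℝ)/7) ^ t * Gpot β p (r 0) ≤ η →
      p 0 ⬝ᵥ r t ≠ 0 ∧
      Real.sqrt (∑ i ∈ Finset.univ.erase 0, (xi p (r t) i) ^ 2) ≤ Gpot β p (r t) ∧
      Gpot β p (r t) ≤ η := by
  have hcontract : ∀ t, p 0 ⬝ᵥ r t ≠ 0 ∧ Gpot β p (r t) ≤ (5 / 7 : ℝ) ^ t * Gpot β p (r 0) := by
    intro t
    induction t with
    | zero => exact ⟨hr0, (one_mul _).ge⟩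
    | succ t ih =>
      obtain ⟨ε, -, hεle, herr⟩ := hstep t
      obtain ⟨hne, hle⟩ := Gpot_step hM hβpos hanti hhalf horth heig ih.1 hεle herr
      refine ⟨hne, hle.trans ?_⟩
      rw [pow_succ', mul_assoc]
      exact mul_le_mul_of_nonneg_left ih.2 (by norm_num)
  intro η _ t ht
  obtain ⟨hne, hle⟩ := hcontract t
  have hrt : r t ≠ 0 := fun h => hne (h ▸ dotProduct_zero _)
  exact ⟨hne, sqrt_sum_sq_le_potential hβpos hanti (div_ne_zero hne (vnorm_ne_zero hrt))
    (sq_xi_le_one horth (r t) 0), hle.trans ht⟩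

/-- linear convergence of inexact shift-and-invert power iterations:
if each least squares problem is solved to the required accuracy, then `G(r_t)`
(and hence `|sin θ_t|`) drops below `η` as soon as `(5/7)^t G(r₀) ≤ η`. -/
theorem stmt_6 {d : ℕ} (M : Matrix (Fin (d+2)) (Fin (d+2)) ℝ) (hM : M.PosDef)
    (β : Fin (d+2) → ℝ) (p : Fin (d+2) → Fin (d+2) → ℝ)
    (hβpos : ∀ i, 0 < β i) (hanti : Antitone β) (hgap : β 1 < β 0)
    (hhalf : 2 * β 1 ≤ β 0)
    (horth : ∀ i j, p i ⬝ᵥ p j = if i = j then 1 else 0)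
    (heig : ∀ i, M.mulVec (p i) = β i • p i)
    (r : ℕ → Fin (d+2) → ℝ) (hrne : ∀ t, r t ≠ 0) (hr0 : p 0 ⬝ᵥ r 0 ≠ 0)
    (hstep : ∀ t : ℕ, ∃ ε : ℝ, 0 ≤ ε ∧
        ε ≤ min (∑ i ∈ Finset.univ.erase 0, (xi p (r t) i) ^ 2 / β i)
              ((xi p (r t) 0) ^ 2 / β 0) * (β 0 - β 1) ^ 2 / 32 ∧
        Real.sqrt ((r (t+1) - M.mulVec (r t)) ⬝ᵥ (M⁻¹).mulVec (r (t+1) - M.mulVec (r t)))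
          ≤ Real.sqrt (2 * ε) * vnorm (r t)) :
    ∀ η : ℝ, η ∈ Set.Ioo (0 : ℝ) 1 → ∀ t : ℕ, ((5 : ℝ)/7) ^ t * Gpot β p (r 0) ≤ η →
      p 0 ⬝ᵥ r t ≠ 0 ∧
      Real.sqrt (∑ i ∈ Finset.univ.erase 0, (xi p (r t) i) ^ 2) ≤ Gpot β p (r t) ∧
      Gpot β p (r t) ≤ η :=
  stmt_6_general M hM β p hβpos hanti hhalf horth heig r hr0 hstep
end
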